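/- arXiv:1611.07834 — 2 statements merged into one kernel-verified Lean document; each statement's English description precedes it below -/
import Mathlib

section
/- Let H = H₊ ⊕ H₋ be a polarized Hilbert space, and let A be a bounded invertible operator on H with block decomposition A = [[a, b], [c, d]] such that b and c are Hilbert-Schmidt. Then the off-diagonal blocks of A⁻¹ are also Hilbert-Schmidt operators. Consequently the set GL_HS(H) of invertible bounded operators with Hilbert-Schmidt off-diagonal blocks is a group under composition. -/
open Module

/-- A continuous linear map between complex inner product spaces is Hilbert–Schmidt if
`∑ ‖T eᵢ‖² < ∞` for some Hilbert (orthonormal) basis `(eᵢ)`. -/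
def IsHilbertSchmidt {E F : Type*} [NormedAddCommGroup E] [InnerProductSpace ℂ E]
    [NormedAddCommGroup F] [InnerProductSpace ℂ F] (T : E →L[ℂ] F) : Prop :=
  ∃ (ι : Type) (b : HilbertBasis ι ℂ E), Summable (fun i => ‖T (b i)‖ ^ 2)

variable {H : Type} [NormedAddCommGroup H] [InnerProductSpace ℂ H] [CompleteSpace H]

/-- The block `b : H₋ → H₊` of a bounded operator `A` on a polarized Hilbert space
`H = H₊ ⊕ H₋`, i.e. `pr₊ ∘ A` restricted to `H₋`. -/
noncomputable def offBlock (Hp Hm : Submodule ℂ H) [CompleteSpace Hp]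
    (A : H →L[ℂ] H) : Hm →L[ℂ] Hp :=
  (Hp.orthogonalProjection).comp (A.comp Hm.subtypeL)

/-- An invertible bounded operator on the polarized space `H = H₊ ⊕ H₋` belongs to `GL_HS(H)`
if both off-diagonal blocks are Hilbert–Schmidt. -/
def memGLHS (Hp Hm : Submodule ℂ H) [CompleteSpace Hp] [CompleteSpace Hm]
    (A : H ≃L[ℂ] H) : Prop :=
  IsHilbertSchmidt (offBlock Hp Hm (A : H →L[ℂ] H)) ∧
  IsHilbertSchmidt (offBlock Hm Hp (A : H →L[ℂ] H))

/-!
Let `P` be the orthogonal projection onto `H₊`. The off-diagonal blocks of `A` are Hilbert–Schmidt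
exactly when `P A (1 - P)` and `(1 - P) A P` are, i.e. exactly when the commutator
`P A - A P = P A (1 - P) - (1 - P) A P` is (multiply it by `P` and `1 - P` on either side to
recover the two pieces). Hilbert–Schmidt operators form a two-sided ideal: the left ideal
property is the bound `‖S T e‖ ≤ ‖S‖ ‖T e‖`, and the right one follows from it by taking
adjoints, because Parseval gives `∑ ‖T eᵢ‖² = ∑ᵢ ∑ⱼ |⟪fⱼ, T eᵢ⟫|² = ∑ ‖T* fⱼ‖²` for any
Hilbert bases `(eᵢ)`, `(fⱼ)`. The identities `[P, BC] = [P, B] C + B [P, C]` and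
`[P, A⁻¹] = -A⁻¹ [P, A] A⁻¹` then give closure under products and inverses.
-/

open scoped ENNReal InnerProductSpace

theorem summable_norm_sq_iff_tsum_enorm_sq_ne_top {ι E : Type*} [SeminormedAddCommGroup E]
    (g : ι → E) : Summable (fun i => ‖g i‖ ^ 2) ↔ ∑' i, ‖g i‖ₑ ^ 2 ≠ ∞ := by
  have h := (tsum_enorm_ne_top_iff_summable_norm (E := ℝ) (f := fun i => ‖g i‖ ^ 2)).symm
  simp only [norm_pow, norm_norm, enorm_pow, enorm_norm] at h
  exact h

theorem enorm_inner_symm {𝕜 E : Type*} [RCLike 𝕜] [NormedAddCommGroup E]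
    [InnerProductSpace 𝕜 E] (x y : E) : ‖⟪x, y⟫_𝕜‖ₑ = ‖⟪y, x⟫_𝕜‖ₑ := by
  rw [← inner_conj_symm, RCLike.enorm_conj]

theorem HilbertBasis.hasSum_norm_inner_sq {ι 𝕜 E : Type*} [RCLike 𝕜] [NormedAddCommGroup E]
    [InnerProductSpace 𝕜 E] (b : HilbertBasis ι 𝕜 E) (x : E) :
    HasSum (fun i => ‖⟪b i, x⟫_𝕜‖ ^ 2) (‖x‖ ^ 2) := by
  simpa [b.repr_apply_apply, Real.rpow_two] using lp.hasSum_norm (p := 2) (by norm_num) (b.repr x)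

theorem HilbertBasis.enorm_sq_eq_tsum {ι 𝕜 E : Type*} [RCLike 𝕜] [NormedAddCommGroup E]
    [InnerProductSpace 𝕜 E] (b : HilbertBasis ι 𝕜 E) (x : E) :
    ‖x‖ₑ ^ 2 = ∑' i, ‖⟪b i, x⟫_𝕜‖ₑ ^ 2 := by
  simp only [← ofReal_norm, ← ENNReal.ofReal_pow (norm_nonneg _)]
  rw [← ENNReal.ofReal_tsum_of_nonneg (fun _ => by positivity) (b.hasSum_norm_inner_sq x).summable,
    (b.hasSum_norm_inner_sq x).tsum_eq]

section HilbertSchmidt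

open ContinuousLinearMap

variable {E F G : Type} [NormedAddCommGroup E] [InnerProductSpace ℂ E]
  [NormedAddCommGroup F] [InnerProductSpace ℂ F] [NormedAddCommGroup G] [InnerProductSpace ℂ G]

-- The sums are taken in `ℝ≥0∞` so that the double series can be swapped unconditionally.
theorem tsum_enorm_sq_apply_eq_tsum_enorm_sq_adjoint [CompleteSpace E] [CompleteSpace F]
    {ι κ : Type*} (T : E →L[ℂ] F) (e : HilbertBasis ι ℂ E) (f : HilbertBasis κ ℂ F) :
    ∑' i, ‖T (e i)‖ₑ ^ 2 = ∑' j, ‖adjoint T (f j)‖ₑ ^ 2 := by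
  calc ∑' i, ‖T (e i)‖ₑ ^ 2 = ∑' i, ∑' j, ‖⟪f j, T (e i)⟫_ℂ‖ₑ ^ 2 := by
        simp only [f.enorm_sq_eq_tsum]
    _ = ∑' j, ∑' i, ‖⟪e i, adjoint T (f j)⟫_ℂ‖ₑ ^ 2 := by
        rw [ENNReal.tsum_comm]
        refine tsum_congr fun j => tsum_congr fun i => ?_
        rw [adjoint_inner_right, enorm_inner_symm]
    _ = ∑' j, ‖adjoint T (f j)‖ₑ ^ 2 := by simp only [e.enorm_sq_eq_tsum]

theorem isHilbertSchmidt_iff_tsum_enorm_sq_ne_top [CompleteSpace E] [CompleteSpace F]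
    {ι : Type} (T : E →L[ℂ] F) (e : HilbertBasis ι ℂ E) :
    IsHilbertSchmidt T ↔ ∑' i, ‖T (e i)‖ₑ ^ 2 ≠ ∞ := by
  refine ⟨fun ⟨ι', e', h⟩ => ?_,
    fun h => ⟨ι, e, (summable_norm_sq_iff_tsum_enorm_sq_ne_top _).2 h⟩⟩
  obtain ⟨_, f, -⟩ := exists_hilbertBasis ℂ F
  rw [tsum_enorm_sq_apply_eq_tsum_enorm_sq_adjoint T e f,
    ← tsum_enorm_sq_apply_eq_tsum_enorm_sq_adjoint T e' f]
  exact (summable_norm_sq_iff_tsum_enorm_sq_ne_top _).1 h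

theorem isHilbertSchmidt_zero [CompleteSpace E] : IsHilbertSchmidt (0 : E →L[ℂ] F) := by
  obtain ⟨ι, e, -⟩ := exists_hilbertBasis ℂ E
  exact ⟨ι, e, by simp [summable_zero]⟩

namespace IsHilbertSchmidt

theorem summable [CompleteSpace E] [CompleteSpace F] {T : E →L[ℂ] F} (hT : IsHilbertSchmidt T)
    {ι : Type} (e : HilbertBasis ι ℂ E) : Summable fun i => ‖T (e i)‖ ^ 2 :=
  (summable_norm_sq_iff_tsum_enorm_sq_ne_top _).2
    ((isHilbertSchmidt_iff_tsum_enorm_sq_ne_top T e).1 hT)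

theorem adjoint [CompleteSpace E] [CompleteSpace F] {T : E →L[ℂ] F} (hT : IsHilbertSchmidt T) :
    IsHilbertSchmidt (ContinuousLinearMap.adjoint T) := by
  obtain ⟨_, e, -⟩ := exists_hilbertBasis ℂ E
  obtain ⟨_, f, -⟩ := exists_hilbertBasis ℂ F
  rw [isHilbertSchmidt_iff_tsum_enorm_sq_ne_top _ f,
    ← tsum_enorm_sq_apply_eq_tsum_enorm_sq_adjoint T e f]
  exact (isHilbertSchmidt_iff_tsum_enorm_sq_ne_top T e).1 hT

theorem comp_left {T : E →L[ℂ] F} (hT : IsHilbertSchmidt T) (S : F →L[ℂ] G) :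
    IsHilbertSchmidt (S.comp T) := by
  obtain ⟨ι, e, h⟩ := hT
  refine ⟨ι, e, (h.mul_left (‖S‖ ^ 2)).of_nonneg_of_le (fun _ => by positivity) fun i => ?_⟩
  rw [← mul_pow]
  gcongr
  exact S.le_opNorm _

theorem comp_right [CompleteSpace E] [CompleteSpace F] [CompleteSpace G] {T : F →L[ℂ] G}
    (hT : IsHilbertSchmidt T) (S : E →L[ℂ] F) : IsHilbertSchmidt (T.comp S) := by
  simpa only [adjoint_comp, adjoint_adjoint] using
    (hT.adjoint.comp_left (ContinuousLinearMap.adjoint S)).adjoint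

theorem add [CompleteSpace E] [CompleteSpace F] {T S : E →L[ℂ] F} (hT : IsHilbertSchmidt T)
    (hS : IsHilbertSchmidt S) : IsHilbertSchmidt (T + S) := by
  obtain ⟨ι, e, h⟩ := hT
  refine ⟨ι, e, ((h.add (hS.summable e)).mul_left 2).of_nonneg_of_le
    (fun _ => by positivity) fun i => ?_⟩
  have := norm_add_le (T (e i)) (S (e i))
  rw [add_apply]
  nlinarith [norm_nonneg (T (e i) + S (e i)), sq_nonneg (‖T (e i)‖ - ‖S (e i)‖)]

theorem neg {T : E →L[ℂ] F} (hT : IsHilbertSchmidt T) : IsHilbertSchmidt (-T) := by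
  obtain ⟨ι, e, h⟩ := hT
  exact ⟨ι, e, by simpa only [neg_apply, norm_neg] using h⟩

theorem sub [CompleteSpace E] [CompleteSpace F] {T S : E →L[ℂ] F} (hT : IsHilbertSchmidt T)
    (hS : IsHilbertSchmidt S) : IsHilbertSchmidt (T - S) := by
  simpa only [sub_eq_add_neg] using hT.add hS.neg

end IsHilbertSchmidt

end HilbertSchmidt

theorem IsIdempotentElem.mul_commutator_mul_one_sub {R : Type*} [Ring R] {p : R}
    (hp : IsIdempotentElem p) (a : R) : p * (p * a - a * p) * (1 - p) = p * a * (1 - p) := by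
  calc p * (p * a - a * p) * (1 - p) = p * p * a * (1 - p) - p * a * (p * (1 - p)) := by
        noncomm_ring
    _ = p * a * (1 - p) := by rw [hp.eq, hp.mul_one_sub_self, mul_zero, sub_zero]

theorem IsIdempotentElem.one_sub_mul_commutator_mul {R : Type*} [Ring R] {p : R}
    (hp : IsIdempotentElem p) (a : R) : (1 - p) * (p * a - a * p) * p = -((1 - p) * a * p) := by
  calc (1 - p) * (p * a - a * p) * p = (1 - p) * p * a * p - (1 - p) * a * (p * p) := by
        noncomm_ring
    _ = -((1 - p) * a * p) := by rw [hp.eq, hp.one_sub_mul_self, zero_mul, zero_mul, zero_sub]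

section Commutator

variable {E : Type} [NormedAddCommGroup E] [InnerProductSpace ℂ E] [CompleteSpace E]

theorem isHilbertSchmidt_offDiagonal_iff_commutator {P : E →L[ℂ] E} (hP : IsIdempotentElem P)
    (A : E →L[ℂ] E) :
    IsHilbertSchmidt (P * A * (1 - P)) ∧ IsHilbertSchmidt ((1 - P) * A * P) ↔
      IsHilbertSchmidt (P * A - A * P) := by
  refine ⟨fun ⟨h₁, h₂⟩ => ?_, fun h => ⟨?_, ?_⟩⟩
  · convert h₁.sub h₂ using 1
    noncomm_ring
  · rw [← hP.mul_commutator_mul_one_sub]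
    exact (h.comp_left P).comp_right (1 - P)
  · rw [← neg_neg ((1 - P) * A * P), ← hP.one_sub_mul_commutator_mul]
    exact ((h.comp_left (1 - P)).comp_right P).neg

theorem isHilbertSchmidt_commutator_mul {P A B : E →L[ℂ] E}
    (hA : IsHilbertSchmidt (P * A - A * P)) (hB : IsHilbertSchmidt (P * B - B * P)) :
    IsHilbertSchmidt (P * (A * B) - A * B * P) := by
  have : P * (A * B) - A * B * P = (P * A - A * P) * B + A * (P * B - B * P) := by noncomm_ring
  rw [this]
  exact (hA.comp_right B).add (hB.comp_left A)

theorem isHilbertSchmidt_commutator_of_mul_eq_one {P A A' : E →L[ℂ] E} (h₁ : A * A' = 1)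
    (h₂ : A' * A = 1) (hA : IsHilbertSchmidt (P * A - A * P)) :
    IsHilbertSchmidt (P * A' - A' * P) := by
  have : P * A' - A' * P = -(A' * (P * A - A * P) * A') := by
    calc P * A' - A' * P = A' * A * P * A' - A' * P * (A * A') := by rw [h₁, h₂]; noncomm_ring
      _ = _ := by noncomm_ring
  rw [this]
  exact ((hA.comp_left A').comp_right A').neg

end Commutator

section Polarization

variable (K L : Submodule ℂ H) [CompleteSpace K] [CompleteSpace L]

theorem isHilbertSchmidt_offBlock_iff (A : H →L[ℂ] H) :
    IsHilbertSchmidt (offBlock K L A) ↔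
      IsHilbertSchmidt (K.starProjection * A * L.starProjection) := by
  have hfactor : K.starProjection * A * L.starProjection =
      K.subtypeL ∘L offBlock K L A ∘L L.orthogonalProjectionOnto := rfl
  have hrestrict : offBlock K L A = K.orthogonalProjectionOnto ∘L
      (K.starProjection * A * L.starProjection) ∘L L.subtypeL := by
    ext v
    simp only [hfactor, ContinuousLinearMap.comp_apply, Submodule.subtypeL_apply,
      Submodule.orthogonalProjectionOnto_mem_subspace_eq_self]
  refine ⟨fun h => ?_, fun h => ?_⟩
  · rw [hfactor]
    exact (h.comp_right _).comp_left _
  · rw [hrestrict]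
    exact (h.comp_right _).comp_left _

theorem memGLHS_orthogonal_iff (A : H ≃L[ℂ] H) :
    memGLHS K Kᗮ A ↔ IsHilbertSchmidt
      (K.starProjection * (A : H →L[ℂ] H) - (A : H →L[ℂ] H) * K.starProjection) := by
  rw [memGLHS, isHilbertSchmidt_offBlock_iff, isHilbertSchmidt_offBlock_iff,
    Submodule.starProjection_orthogonal',
    isHilbertSchmidt_offDiagonal_iff_commutator K.isIdempotentElem_starProjection]

end Polarization

theorem inverse_offdiagonal_hilbertSchmidt_and_GLHS_group_general
    (Hp Hm : Submodule ℂ H) [CompleteSpace Hp] [CompleteSpace Hm]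
    (hperp : Hm = Hpᗮ)
    (A : H ≃L[ℂ] H) (hA : memGLHS Hp Hm A) :
    memGLHS Hp Hm A.symm ∧
    memGLHS Hp Hm (ContinuousLinearEquiv.refl ℂ H) ∧
    (∀ B C : H ≃L[ℂ] H, memGLHS Hp Hm B → memGLHS Hp Hm C → memGLHS Hp Hm (B.trans C)) := by
  subst hperp
  simp only [memGLHS_orthogonal_iff] at hA ⊢
  refine ⟨isHilbertSchmidt_commutator_of_mul_eq_one ?_ ?_ hA, ?_, fun B C hB hC => ?_⟩
  · ext x; simp
  · ext x; simp
  · rw [ContinuousLinearEquiv.coe_refl, ← ContinuousLinearMap.one_def, mul_one, one_mul, sub_self]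
    exact isHilbertSchmidt_zero
  · have hBC : ((B.trans C : H ≃L[ℂ] H) : H →L[ℂ] H) = C * B := by ext x; simp
    rw [hBC]
    exact isHilbertSchmidt_commutator_mul hC hB

/-- Let `H = H₊ ⊕ H₋` be a polarized Hilbert space (orthogonal decomposition
into closed infinite-dimensional subspaces) and `A` a bounded invertible operator on `H` whose
off-diagonal blocks are Hilbert–Schmidt. Then the off-diagonal blocks of `A⁻¹` are also
Hilbert–Schmidt; consequently `GL_HS(H)` is a group under composition (it contains the
identity and is closed under composition and inversion). -/
theorem inverse_offdiagonal_hilbertSchmidt_and_GLHS_group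
    (Hp Hm : Submodule ℂ H) [CompleteSpace Hp] [CompleteSpace Hm]
    (hperp : Hm = Hpᗮ) (hip : ¬ FiniteDimensional ℂ Hp) (him : ¬ FiniteDimensional ℂ Hm)
    (A : H ≃L[ℂ] H) (hA : memGLHS Hp Hm A) :
    memGLHS Hp Hm A.symm ∧
    memGLHS Hp Hm (ContinuousLinearEquiv.refl ℂ H) ∧
    (∀ B C : H ≃L[ℂ] H, memGLHS Hp Hm B → memGLHS Hp Hm C → memGLHS Hp Hm (B.trans C)) :=
  inverse_offdiagonal_hilbertSchmidt_and_GLHS_group_general Hp Hm hperp A hA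
end

section
/- With the notation above (smooth family of orthogonal projections π on a Hilbert space H, π⊥ = 1 - π, A'_E = π⊥∂_z π, A''_E = π⊥∂_z̄ π, ∂''_E = π∂_z̄π, ∂''_{E⊥} = π⊥∂_z̄π⊥, and analogously A'_{E⊥} = π∂_z π⊥, ∂''-operators for E⊥), the bundle E is harmonic (A'_E ∘ ∂''_E = ∂''_{E⊥} ∘ A'_E) if and only if its orthogonal complement E⊥ is harmonic (A'_{E⊥} ∘ ∂''_{E⊥} = ∂''_E ∘ A'_{E⊥}). -/
set_option linter.unusedSectionVars false
set_option maxHeartbeats 1000000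


variable {H : Type*} [NormedAddCommGroup H] [InnerProductSpace ℂ H] [CompleteSpace H]

/-- Wirtinger derivative `∂f/∂z` of an `H`-valued function on `ℂ`. -/
noncomputable def dZ (f : ℂ → H) (z : ℂ) : H :=
  ((1 : ℂ) / 2) • (fderiv ℝ f z 1) - (Complex.I / 2) • (fderiv ℝ f z Complex.I)

/-- Wirtinger derivative `∂f/∂z̄` of an `H`-valued function on `ℂ`. -/
noncomputable def dZbar (f : ℂ → H) (z : ℂ) : H :=
  ((1 : ℂ) / 2) • (fderiv ℝ f z 1) + (Complex.I / 2) • (fderiv ℝ f z Complex.I)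

/-- The operator `P ∘ ∂/∂z ∘ Q` on `H`-valued functions. -/
noncomputable def sandZ (P Q : ℂ → H →L[ℂ] H) (f : ℂ → H) (z : ℂ) : H :=
  P z (dZ (fun w => Q w (f w)) z)

/-- The operator `P ∘ ∂/∂z̄ ∘ Q` on `H`-valued functions. -/
noncomputable def sandZbar (P Q : ℂ → H →L[ℂ] H) (f : ℂ → H) (z : ℂ) : H :=
  P z (dZbar (fun w => Q w (f w)) z)

/-- The subbundle determined by the family of projections `π` is harmonic:
`A'_E ∘ ∂''_E = ∂''_{E⊥} ∘ A'_E` on smooth functions, where `A'_E = π⊥∂_zπ`,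
`∂''_E = π∂_z̄π`, `∂''_{E⊥} = π⊥∂_z̄π⊥`. -/
def IsHarmonicFamily (π : ℂ → H →L[ℂ] H) : Prop :=
  ∀ f : ℂ → H, ContDiff ℝ (⊤ : ℕ∞) f → ∀ z : ℂ,
    sandZ (fun w => 1 - π w) π (sandZbar π π f) z
      = sandZbar (fun w => 1 - π w) (fun w => 1 - π w) (sandZ (fun w => 1 - π w) π f) z

open ContinuousLinearMap in
theorem fderiv_postcomp {E F G : Type*} [NormedAddCommGroup E] [NormedSpace ℝ E]
    [NormedAddCommGroup F] [NormedSpace ℝ F] [NormedAddCommGroup G] [NormedSpace ℝ G]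
    (L : F →L[ℝ] G) {Q : E → F} {z : E} (h : DifferentiableAt ℝ Q z) :
    fderiv ℝ (fun w => L (Q w)) z = L.comp (fderiv ℝ Q z) :=
  (L.hasFDerivAt.comp z h.hasFDerivAt).fderiv

open ContinuousLinearMap in
theorem fderiv_clm_apply_complex {Q : ℂ → H →L[ℂ] H} {f : ℂ → H} {z : ℂ}
    (hQ : DifferentiableAt ℝ Q z) (hf : DifferentiableAt ℝ f z) (v : ℂ) :
    fderiv ℝ (fun w => Q w (f w)) z v = (fderiv ℝ Q z v) (f z) + Q z (fderiv ℝ f z v) := by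
  have hL : DifferentiableAt ℝ (fun w => (restrictScalarsL ℂ H H ℝ ℝ) (Q w)) z :=
    ((restrictScalarsL ℂ H H ℝ ℝ).differentiable.differentiableAt).comp z hQ
  have e : (fun w => Q w (f w)) = fun w => ((restrictScalarsL ℂ H H ℝ ℝ) (Q w)) (f w) := rfl
  rw [e, fderiv_clm_apply hL hf, fderiv_postcomp _ hQ]
  simp [add_comm]

open ContinuousLinearMap in
theorem contDiff_clm_apply_complex {Q : ℂ → H →L[ℂ] H} {f : ℂ → H}
    (hQ : ContDiff ℝ (⊤ : ℕ∞) Q) (hf : ContDiff ℝ (⊤ : ℕ∞) f) : ContDiff ℝ (⊤ : ℕ∞) (fun w => Q w (f w)) := by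
  have : ContDiff ℝ (⊤ : ℕ∞) (fun w => ((restrictScalarsL ℂ H H ℝ ℝ) (Q w)) (f w)) :=
    (((restrictScalarsL ℂ H H ℝ ℝ).contDiff).comp hQ).clm_apply hf
  exact this

noncomputable def opdZ (Q : ℂ → H →L[ℂ] H) (z : ℂ) : H →L[ℂ] H :=
  ((1 : ℂ) / 2) • (fderiv ℝ Q z 1) - (Complex.I / 2) • (fderiv ℝ Q z Complex.I)

noncomputable def opdZbar (Q : ℂ → H →L[ℂ] H) (z : ℂ) : H →L[ℂ] H :=
  ((1 : ℂ) / 2) • (fderiv ℝ Q z 1) + (Complex.I / 2) • (fderiv ℝ Q z Complex.I)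

theorem contDiff_fderiv_apply {F : Type*} [NormedAddCommGroup F] [NormedSpace ℝ F] {Q : ℂ → F}
    (hQ : ContDiff ℝ (⊤ : ℕ∞) Q) (v : ℂ) : ContDiff ℝ (⊤ : ℕ∞) (fun z => fderiv ℝ Q z v) :=
  (hQ.fderiv_right (by simp)).clm_apply contDiff_const

theorem contDiff_opdZ {Q : ℂ → H →L[ℂ] H} (hQ : ContDiff ℝ (⊤ : ℕ∞) Q) :
    ContDiff ℝ (⊤ : ℕ∞) (fun z => opdZ Q z) := by
  unfold opdZ
  exact ((contDiff_fderiv_apply hQ 1).const_smul _).sub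
    ((contDiff_fderiv_apply hQ Complex.I).const_smul _)

theorem contDiff_opdZbar {Q : ℂ → H →L[ℂ] H} (hQ : ContDiff ℝ (⊤ : ℕ∞) Q) :
    ContDiff ℝ (⊤ : ℕ∞) (fun z => opdZbar Q z) := by
  unfold opdZbar
  exact ((contDiff_fderiv_apply hQ 1).const_smul _).add
    ((contDiff_fderiv_apply hQ Complex.I).const_smul _)

theorem contDiff_dZ {f : ℂ → H} (hf : ContDiff ℝ (⊤ : ℕ∞) f) : ContDiff ℝ (⊤ : ℕ∞) (dZ f) := by
  unfold dZ
  exact ((contDiff_fderiv_apply hf 1).const_smul _).sub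
    ((contDiff_fderiv_apply hf Complex.I).const_smul _)

theorem contDiff_dZbar {f : ℂ → H} (hf : ContDiff ℝ (⊤ : ℕ∞) f) : ContDiff ℝ (⊤ : ℕ∞) (dZbar f) := by
  unfold dZbar
  exact ((contDiff_fderiv_apply hf 1).const_smul _).add
    ((contDiff_fderiv_apply hf Complex.I).const_smul _)

theorem dZ_clm_apply {Q : ℂ → H →L[ℂ] H} {f : ℂ → H} {z : ℂ}
    (hQ : DifferentiableAt ℝ Q z) (hf : DifferentiableAt ℝ f z) :
    dZ (fun w => Q w (f w)) z = (opdZ Q z) (f z) + Q z (dZ f z) := by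
  simp only [dZ, opdZ, fderiv_clm_apply_complex hQ hf, ContinuousLinearMap.sub_apply,
    ContinuousLinearMap.smul_apply, smul_add, map_sub, map_smul]
  abel

theorem dZbar_clm_apply {Q : ℂ → H →L[ℂ] H} {f : ℂ → H} {z : ℂ}
    (hQ : DifferentiableAt ℝ Q z) (hf : DifferentiableAt ℝ f z) :
    dZbar (fun w => Q w (f w)) z = (opdZbar Q z) (f z) + Q z (dZbar f z) := by
  simp only [dZbar, opdZbar, fderiv_clm_apply_complex hQ hf, ContinuousLinearMap.add_apply,
    ContinuousLinearMap.smul_apply, smul_add, map_add, map_smul]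
  abel

theorem dZ_add {f g : ℂ → H} {z : ℂ} (hf : DifferentiableAt ℝ f z)
    (hg : DifferentiableAt ℝ g z) :
    dZ (fun w => f w + g w) z = dZ f z + dZ g z := by
  simp only [dZ, fderiv_fun_add hf hg, ContinuousLinearMap.add_apply, smul_add]
  abel

theorem dZbar_add {f g : ℂ → H} {z : ℂ} (hf : DifferentiableAt ℝ f z)
    (hg : DifferentiableAt ℝ g z) :
    dZbar (fun w => f w + g w) z = dZbar f z + dZbar g z := by
  simp only [dZbar, fderiv_fun_add hf hg, ContinuousLinearMap.add_apply, smul_add]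
  abel

theorem dZ_const (v : H) (z : ℂ) : dZ (fun _ => v) z = 0 := by
  simp [dZ]

theorem dZbar_const (v : H) (z : ℂ) : dZbar (fun _ => v) z = 0 := by
  simp [dZbar]

theorem fderiv_mul_apply {P Q : ℂ → H →L[ℂ] H} {z : ℂ} (hP : DifferentiableAt ℝ P z)
    (hQ : DifferentiableAt ℝ Q z) (v : ℂ) :
    fderiv ℝ (fun w => P w * Q w) z v = P z * fderiv ℝ Q z v + fderiv ℝ P z v * Q z := by
  rw [fderiv_fun_mul' hP hQ]
  simp [ContinuousLinearMap.add_apply, ContinuousLinearMap.smul_apply,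
    ContinuousLinearMap.smulRight_apply, smul_eq_mul]

theorem opdZ_mul {P Q : ℂ → H →L[ℂ] H} {z : ℂ} (hP : DifferentiableAt ℝ P z)
    (hQ : DifferentiableAt ℝ Q z) :
    opdZ (fun w => P w * Q w) z = opdZ P z * Q z + P z * opdZ Q z := by
  simp only [opdZ, fderiv_mul_apply hP hQ, smul_add, sub_mul, mul_sub, smul_mul_assoc,
    mul_smul_comm]
  abel

theorem opdZbar_mul {P Q : ℂ → H →L[ℂ] H} {z : ℂ} (hP : DifferentiableAt ℝ P z)
    (hQ : DifferentiableAt ℝ Q z) :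
    opdZbar (fun w => P w * Q w) z = opdZbar P z * Q z + P z * opdZbar Q z := by
  simp only [opdZbar, fderiv_mul_apply hP hQ, smul_add, add_mul, mul_add, smul_mul_assoc,
    mul_smul_comm]
  abel

theorem opdZ_add {P Q : ℂ → H →L[ℂ] H} {z : ℂ} (hP : DifferentiableAt ℝ P z)
    (hQ : DifferentiableAt ℝ Q z) :
    opdZ (fun w => P w + Q w) z = opdZ P z + opdZ Q z := by
  simp only [opdZ, fderiv_fun_add hP hQ, ContinuousLinearMap.add_apply, smul_add]
  abel

theorem opdZbar_add {P Q : ℂ → H →L[ℂ] H} {z : ℂ} (hP : DifferentiableAt ℝ P z)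
    (hQ : DifferentiableAt ℝ Q z) :
    opdZbar (fun w => P w + Q w) z = opdZbar P z + opdZbar Q z := by
  simp only [opdZbar, fderiv_fun_add hP hQ, ContinuousLinearMap.add_apply, smul_add]
  abel

theorem opdZ_one_sub {Q : ℂ → H →L[ℂ] H} {z : ℂ} (hQ : DifferentiableAt ℝ Q z) :
    opdZ (fun w => 1 - Q w) z = -opdZ Q z := by
  simp only [opdZ, fderiv_const_sub (1 : H →L[ℂ] H), ContinuousLinearMap.neg_apply, smul_neg]
  abel

theorem opdZbar_one_sub {Q : ℂ → H →L[ℂ] H} {z : ℂ} (hQ : DifferentiableAt ℝ Q z) :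
    opdZbar (fun w => 1 - Q w) z = -opdZbar Q z := by
  simp only [opdZbar, fderiv_const_sub (1 : H →L[ℂ] H), ContinuousLinearMap.neg_apply, smul_neg]
  abel

theorem opdZ_neg {Q : ℂ → H →L[ℂ] H} {z : ℂ} :
    opdZ (fun w => -(Q w)) z = -opdZ Q z := by
  simp only [opdZ, fderiv_fun_neg, ContinuousLinearMap.neg_apply, smul_neg]
  abel

theorem opdZbar_neg {Q : ℂ → H →L[ℂ] H} {z : ℂ} :
    opdZbar (fun w => -(Q w)) z = -opdZbar Q z := by
  simp only [opdZbar, fderiv_fun_neg, ContinuousLinearMap.neg_apply, smul_neg]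
  abel

theorem fderiv_star_apply {Q : ℂ → H →L[ℂ] H} {z : ℂ} (hQ : DifferentiableAt ℝ Q z) (v : ℂ) :
    fderiv ℝ (fun w => star (Q w)) z v = star (fderiv ℝ Q z v) := by
  have e : (fun w => star (Q w)) = fun w =>
      ((starL' ℝ : (H →L[ℂ] H) ≃L[ℝ] (H →L[ℂ] H)) : (H →L[ℂ] H) →L[ℝ] (H →L[ℂ] H)) (Q w) := rfl
  rw [e, fderiv_postcomp _ hQ]
  simp

theorem star_opdZ {Q : ℂ → H →L[ℂ] H} {z : ℂ} (hQ : DifferentiableAt ℝ Q z) :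
    star (opdZ Q z) = opdZbar (fun w => star (Q w)) z := by
  have h1 : star ((1 : ℂ)/2) = (1 : ℂ)/2 := by simp [Complex.ext_iff]
  have h2 : star (Complex.I/2) = -(Complex.I/2) := by
    rw [Complex.star_def, map_div₀, Complex.conj_I]
    norm_num [neg_div, map_ofNat]
  simp only [opdZ, opdZbar, fderiv_star_apply hQ, star_sub, star_smul, h1, h2, neg_smul]
  abel

theorem star_opdZbar {Q : ℂ → H →L[ℂ] H} {z : ℂ} (hQ : DifferentiableAt ℝ Q z) :
    star (opdZbar Q z) = opdZ (fun w => star (Q w)) z := by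
  have h1 : star ((1 : ℂ)/2) = (1 : ℂ)/2 := by simp [Complex.ext_iff]
  have h2 : star (Complex.I/2) = -(Complex.I/2) := by
    rw [Complex.star_def, map_div₀, Complex.conj_I]
    norm_num [neg_div, map_ofNat]
  simp only [opdZ, opdZbar, fderiv_star_apply hQ, star_add, star_smul, h1, h2, neg_smul]
  abel

theorem fderiv2_symm {Q : ℂ → H →L[ℂ] H} (hQ : ContDiff ℝ (⊤ : ℕ∞) Q) (z : ℂ) (u v : ℂ) :
    fderiv ℝ (fun w => fderiv ℝ Q w v) z u = fderiv ℝ (fun w => fderiv ℝ Q w u) z v := by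
  have hdiff : Differentiable ℝ Q := hQ.differentiable (by simp)
  have h1 : ContDiff ℝ (⊤ : ℕ∞) (fderiv ℝ Q) := hQ.fderiv_right (by simp)
  have e : ∀ a b : ℂ, fderiv ℝ (fun w => fderiv ℝ Q w b) z a
      = fderiv ℝ (fderiv ℝ Q) z a b := by
    intro a b
    have e' : (fun w => fderiv ℝ Q w b)
        = fun w => (ContinuousLinearMap.apply ℝ (H →L[ℂ] H) b) (fderiv ℝ Q w) := rfl
    rw [e', fderiv_postcomp _ (h1.differentiable (by simp) z)]
    simp
  rw [e, e]
  exact second_derivative_symmetric (fun y => (hdiff y).hasFDerivAt)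
    ((h1.differentiable (by simp) z).hasFDerivAt) u v

theorem opdZ_opdZbar_comm {Q : ℂ → H →L[ℂ] H} (hQ : ContDiff ℝ (⊤ : ℕ∞) Q) (z : ℂ) :
    opdZ (fun w => opdZbar Q w) z = opdZbar (fun w => opdZ Q w) z := by
  have d1 : ∀ v : ℂ, DifferentiableAt ℝ (fun w => fderiv ℝ Q w v) z :=
    fun v => (contDiff_fderiv_apply hQ v).differentiable (by simp) z
  have fdbar : ∀ v : ℂ, fderiv ℝ (fun w => opdZbar Q w) z v
      = ((1:ℂ)/2) • fderiv ℝ (fun w => fderiv ℝ Q w 1) z v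
        + (Complex.I/2) • fderiv ℝ (fun w => fderiv ℝ Q w Complex.I) z v := by
    intro v
    have e : (fun w => opdZbar Q w) = fun w =>
        ((1:ℂ)/2) • (fderiv ℝ Q w 1) + (Complex.I/2) • (fderiv ℝ Q w Complex.I) := rfl
    rw [e, fderiv_fun_add (((d1 1).fun_const_smul _)) (((d1 Complex.I).fun_const_smul _))]
    rw [ContinuousLinearMap.add_apply, fderiv_fun_const_smul (d1 1), fderiv_fun_const_smul (d1 Complex.I)]
    simp
  have fdz : ∀ v : ℂ, fderiv ℝ (fun w => opdZ Q w) z v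
      = ((1:ℂ)/2) • fderiv ℝ (fun w => fderiv ℝ Q w 1) z v
        - (Complex.I/2) • fderiv ℝ (fun w => fderiv ℝ Q w Complex.I) z v := by
    intro v
    have e : (fun w => opdZ Q w) = fun w =>
        ((1:ℂ)/2) • (fderiv ℝ Q w 1) - (Complex.I/2) • (fderiv ℝ Q w Complex.I) := rfl
    rw [e, fderiv_fun_sub (((d1 1).fun_const_smul _)) (((d1 Complex.I).fun_const_smul _))]
    rw [ContinuousLinearMap.sub_apply, fderiv_fun_const_smul (d1 1), fderiv_fun_const_smul (d1 Complex.I)]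
    simp
  show ((1:ℂ)/2) • fderiv ℝ (fun w => opdZbar Q w) z 1
      - (Complex.I/2) • fderiv ℝ (fun w => opdZbar Q w) z Complex.I
    = ((1:ℂ)/2) • fderiv ℝ (fun w => opdZ Q w) z 1
      + (Complex.I/2) • fderiv ℝ (fun w => opdZ Q w) z Complex.I
  rw [fdbar 1, fdbar Complex.I, fdz 1, fdz Complex.I, fderiv2_symm hQ z Complex.I 1]
  module

theorem E_left (σ : ℂ → H →L[ℂ] H) (hσ : ContDiff ℝ (⊤ : ℕ∞) σ) (hp : ∀ z, σ z * σ z = σ z)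
    (f : ℂ → H) (hf : ContDiff ℝ (⊤ : ℕ∞) f) (z : ℂ) :
    sandZ (fun w => 1 - σ w) σ (sandZbar σ σ f) z
      = ((1 - σ z) * (opdZ σ z * opdZbar σ z)) (f z)
        + ((1 - σ z) * opdZ σ z) (dZbar f z) := by
  have hσd : Differentiable ℝ σ := hσ.differentiable (by simp)
  have hfd : Differentiable ℝ f := hf.differentiable (by simp)
  have happ : ∀ z (x : H), σ z (σ z x) = σ z x := fun z x => by
    simpa [ContinuousLinearMap.mul_apply] using DFunLike.congr_fun (hp z) x
  have hσ'' : ContDiff ℝ (⊤ : ℕ∞) (fun w => opdZbar σ w) := contDiff_opdZbar hσ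
  have hA : ContDiff ℝ (⊤ : ℕ∞) (fun w => σ w * opdZbar σ w) := hσ.mul hσ''
  have hB : ContDiff ℝ (⊤ : ℕ∞) (dZbar f) := contDiff_dZbar hf
  have hg : sandZbar σ σ f = fun w => (σ w * opdZbar σ w) (f w) + σ w (dZbar f w) := by
    funext w
    show σ w (dZbar (fun u => σ u (f u)) w) = _
    rw [dZbar_clm_apply (hσd w) (hfd w), map_add, happ]
    simp [ContinuousLinearMap.mul_apply]
  show (1 - σ z) (dZ (fun w => σ w (sandZbar σ σ f w)) z) = _
  have hinner : (fun w => σ w (sandZbar σ σ f w)) = sandZbar σ σ f := by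
    funext w
    simp only [hg, map_add, ContinuousLinearMap.mul_apply, happ]
  rw [hinner, hg]
  have d1 : DifferentiableAt ℝ (fun w => (σ w * opdZbar σ w) (f w)) z :=
    ((contDiff_clm_apply_complex hA hf).differentiable (by simp)) z
  have d2 : DifferentiableAt ℝ (fun w => σ w (dZbar f w)) z :=
    ((contDiff_clm_apply_complex hσ hB).differentiable (by simp)) z
  rw [dZ_add d1 d2, map_add, dZ_clm_apply (hA.differentiable (by simp) z) (hfd z),
    dZ_clm_apply (hσd z) (hB.differentiable (by simp) z),
    opdZ_mul (hσd z) ((hσ''.differentiable (by simp)) z)]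
  have h0 : ∀ x : H, (1 - σ z) (σ z x) = 0 := fun x => by
    have h : ((1 - σ z) * σ z) x = ((0 : H →L[ℂ] H)) x := by
      rw [sub_mul, one_mul, hp z, sub_self]
    simpa [ContinuousLinearMap.mul_apply] using h
  simp only [map_add, ContinuousLinearMap.add_apply, ContinuousLinearMap.mul_apply, h0,
    add_zero, zero_add]

theorem E_right (σ : ℂ → H →L[ℂ] H) (hσ : ContDiff ℝ (⊤ : ℕ∞) σ) (hp : ∀ z, σ z * σ z = σ z)
    (f : ℂ → H) (hf : ContDiff ℝ (⊤ : ℕ∞) f) (z : ℂ) :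
    sandZbar (fun w => 1 - σ w) (fun w => 1 - σ w) (sandZ (fun w => 1 - σ w) σ f) z
      = ((1 - σ z) * opdZbar (fun w => opdZ σ w) z
          - (1 - σ z) * (opdZbar σ z * opdZ σ z)) (f z)
        + ((1 - σ z) * opdZ σ z) (dZbar f z) := by
  have hσd : Differentiable ℝ σ := hσ.differentiable (by simp)
  have hfd : Differentiable ℝ f := hf.differentiable (by simp)
  have hρ : ContDiff ℝ (⊤ : ℕ∞) (fun w => 1 - σ w) := contDiff_const.sub hσ
  have hρd : Differentiable ℝ (fun w => 1 - σ w) := hρ.differentiable (by simp)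
  have hσ' : ContDiff ℝ (⊤ : ℕ∞) (fun w => opdZ σ w) := contDiff_opdZ hσ
  have happ : ∀ z (x : H), σ z (σ z x) = σ z x := fun z x => by
    simpa [ContinuousLinearMap.mul_apply] using DFunLike.congr_fun (hp z) x
  have h0 : ∀ w (x : H), (1 - σ w) (σ w x) = 0 := fun w x => by
    have h : ((1 - σ w) * σ w) x = ((0 : H →L[ℂ] H)) x := by
      rw [sub_mul, one_mul, hp w, sub_self]
    simpa [ContinuousLinearMap.mul_apply] using h
  have hρρ : ∀ w (x : H), (1 - σ w) ((1 - σ w) x) = (1 - σ w) x := fun w x => by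
    simp only [ContinuousLinearMap.sub_apply, ContinuousLinearMap.one_apply, map_sub, happ]
    abel
  have hh : sandZ (fun w => 1 - σ w) σ f = fun w => ((1 - σ w) * opdZ σ w) (f w) := by
    funext w
    show (1 - σ w) (dZ (fun u => σ u (f u)) w) = _
    rw [dZ_clm_apply (hσd w) (hfd w), map_add, h0]
    simp [ContinuousLinearMap.mul_apply]
  show (1 - σ z) (dZbar (fun w => (1 - σ w) (sandZ (fun w => 1 - σ w) σ f w)) z) = _
  have hinner : (fun w => (1 - σ w) (sandZ (fun w => 1 - σ w) σ f w))
      = fun w => ((1 - σ w) * opdZ σ w) (f w) := by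
    funext w
    simp only [hh, ContinuousLinearMap.mul_apply, hρρ]
  rw [hinner]
  have hC : ContDiff ℝ (⊤ : ℕ∞) (fun w => (1 - σ w) * opdZ σ w) := hρ.mul hσ'
  rw [dZbar_clm_apply (hC.differentiable (by simp) z) (hfd z),
    opdZbar_mul (hρd z) (hσ'.differentiable (by simp) z),
    opdZbar_one_sub (hσd z), map_add]
  simp only [ContinuousLinearMap.add_apply, ContinuousLinearMap.mul_apply,
    ContinuousLinearMap.neg_apply, map_add, map_neg, hρρ]
  simp only [ContinuousLinearMap.sub_apply, ContinuousLinearMap.one_apply, map_sub,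
    ContinuousLinearMap.mul_apply, ContinuousLinearMap.add_apply, map_add,
    ContinuousLinearMap.neg_apply, map_neg]
  abel

theorem ring_lemma {R : Type*} [Ring R] {a b' b'' d : R}
    (hp : a * a = a)
    (hstar : d = d * a + b' * b'' + (b'' * b' + a * d)) :
    ((1 - a) * (b' * b'') + (1 - a) * (b'' * b') = (1 - a) * d ↔ (1 - a) * d * a = 0) := by
  have hρσ : (1 - a) * a = 0 := by rw [sub_mul, one_mul, hp, sub_self]
  have h2 : (1 - a) * d = (1 - a) * d * a
      + ((1 - a) * (b' * b'') + (1 - a) * (b'' * b')) := by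
    calc (1 - a) * d = (1 - a) * (d * a + b' * b'' + (b'' * b' + a * d)) := by rw [← hstar]
      _ = (1 - a) * d * a + ((1 - a) * (b' * b'') + (1 - a) * (b'' * b'))
            + ((1 - a) * a) * d := by noncomm_ring
      _ = (1 - a) * d * a + ((1 - a) * (b' * b'') + (1 - a) * (b'' * b')) := by
            rw [hρσ, zero_mul, add_zero]
  constructor
  · intro h
    rw [h] at h2
    exact right_eq_add.mp h2
  · intro h
    rw [h, zero_add] at h2
    exact h2.symm

theorem key_iff (σ : ℂ → H →L[ℂ] H) (hσ : ContDiff ℝ (⊤ : ℕ∞) σ) (hp : ∀ z, σ z * σ z = σ z) :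
    IsHarmonicFamily σ ↔
      ∀ z, (1 - σ z) * opdZbar (fun w => opdZ σ w) z * σ z = 0 := by
  have hσd : Differentiable ℝ σ := hσ.differentiable (by simp)
  have hσ' : ContDiff ℝ (⊤ : ℕ∞) (fun w => opdZ σ w) := contDiff_opdZ hσ
  have hσ'd : Differentiable ℝ (fun w => opdZ σ w) := hσ'.differentiable (by simp)
  have hstar : ∀ z, opdZbar (fun w => opdZ σ w) z
      = opdZbar (fun w => opdZ σ w) z * σ z + opdZ σ z * opdZbar σ z
        + (opdZbar σ z * opdZ σ z + σ z * opdZbar (fun w => opdZ σ w) z) := by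
    intro z
    have e1 : (fun w => opdZ σ w) = fun w => opdZ σ w * σ w + σ w * opdZ σ w := by
      funext w
      conv_lhs => rw [show σ = fun u => σ u * σ u from funext fun u => (hp u).symm]
      exact opdZ_mul (hσd w) (hσd w)
    conv_lhs => rw [e1]
    rw [opdZbar_add ((hσ'.mul hσ).differentiable (by simp) z)
        ((hσ.mul hσ').differentiable (by simp) z),
      opdZbar_mul (hσ'd z) (hσd z), opdZbar_mul (hσd z) (hσ'd z)]
  have hcond : ∀ z, ((1 - σ z) * (opdZ σ z * opdZbar σ z)
        + (1 - σ z) * (opdZbar σ z * opdZ σ z)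
      = (1 - σ z) * opdZbar (fun w => opdZ σ w) z)
      ↔ (1 - σ z) * opdZbar (fun w => opdZ σ w) z * σ z = 0 :=
    fun z => ring_lemma (hp z) (hstar z)
  constructor
  · intro hH z
    rw [← hcond z]
    ext v
    have h1 := hH (fun _ => v) contDiff_const z
    rw [E_left σ hσ hp _ contDiff_const z, E_right σ hσ hp _ contDiff_const z,
      dZbar_const] at h1
    simp only [map_zero, add_zero] at h1
    simp only [ContinuousLinearMap.add_apply, ContinuousLinearMap.sub_apply] at h1 ⊢
    rw [h1, sub_add_cancel]
  · intro hD f hf z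
    have hop := (hcond z).mpr (hD z)
    rw [E_left σ hσ hp f hf z, E_right σ hσ hp f hf z]
    have e : (1 - σ z) * (opdZ σ z * opdZbar σ z)
        = (1 - σ z) * opdZbar (fun w => opdZ σ w) z
          - (1 - σ z) * (opdZbar σ z * opdZ σ z) := by
      rw [← hop]; abel
    rw [e]

theorem star_D (π : ℂ → H →L[ℂ] H) (hsm : ContDiff ℝ (⊤ : ℕ∞) π) (hsa : ∀ z, IsSelfAdjoint (π z))
    (z : ℂ) : star (opdZbar (fun w => opdZ π w) z) = opdZbar (fun w => opdZ π w) z := by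
  rw [star_opdZbar ((contDiff_opdZ hsm).differentiable (by simp) z)]
  rw [show (fun w => star (opdZ π w)) = (fun w => opdZbar π w) from funext fun w => by
    rw [star_opdZ (hsm.differentiable (by simp) w)]
    congr 1
    exact funext fun u => (hsa u).star_eq]
  exact opdZ_opdZbar_comm hsm z

theorem star_bridge (π : ℂ → H →L[ℂ] H) (hsm : ContDiff ℝ (⊤ : ℕ∞) π)
    (hsa : ∀ z, IsSelfAdjoint (π z)) (z : ℂ) :
    star ((1 - π z) * opdZbar (fun w => opdZ π w) z * π z)
      = π z * opdZbar (fun w => opdZ π w) z * (1 - π z) := by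
  rw [star_mul, star_mul, (hsa z).star_eq, star_D π hsm hsa, star_sub, star_one,
    (hsa z).star_eq, mul_assoc]

/-- For a smooth family of orthogonal projections `π` with `π⊥ = 1 − π`,
the bundle `E` is harmonic if and only if its orthogonal complement `E⊥` is harmonic. -/
theorem harmonic_iff_orthogonal_complement_harmonic
    (π : ℂ → H →L[ℂ] H) (hsm : ContDiff ℝ (⊤ : ℕ∞) π)
    (hproj : ∀ z, (π z).comp (π z) = π z) (hsa : ∀ z, IsSelfAdjoint (π z)) :
    IsHarmonicFamily π ↔ IsHarmonicFamily (fun w => 1 - π w) := by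
  have hmul : ∀ z, π z * π z = π z := fun z => by
    rw [ContinuousLinearMap.mul_def]; exact hproj z
  have hρ : ContDiff ℝ (⊤ : ℕ∞) (fun w => 1 - π w) := contDiff_const.sub hsm
  have hρmul : ∀ z, (1 - π z) * (1 - π z) = 1 - π z := fun z => by
    rw [mul_sub, mul_one, sub_mul, one_mul, hmul z, sub_self, sub_zero]
  rw [key_iff π hsm hmul, key_iff _ hρ hρmul]
  have hop : ∀ z : ℂ, opdZbar (fun w => opdZ (fun v => 1 - π v) w) z
      = - opdZbar (fun w => opdZ π w) z := by
    intro z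
    rw [show (fun w => opdZ (fun v => 1 - π v) w) = fun w => -(opdZ π w) from
      funext fun w => opdZ_one_sub (hsm.differentiable (by simp) w)]
    exact opdZbar_neg
  constructor
  · intro h z
    have hstar0 : π z * opdZbar (fun w => opdZ π w) z * (1 - π z) = 0 := by
      rw [← star_bridge π hsm hsa z, h z, star_zero]
    simp only [hop z, sub_sub_cancel, mul_neg, neg_mul, neg_eq_zero]
    exact hstar0
  · intro h z
    have h' := h z
    simp only [hop z, sub_sub_cancel, mul_neg, neg_mul, neg_eq_zero] at h'
    rw [← star_eq_zero, star_bridge π hsm hsa z]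
    exact h'
end
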